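/- arXiv:0908.2467 — 2 statements merged into one kernel-verified Lean document; each statement's English description precedes it below -/
import Mathlib

section
/- If the chromatic number of the coloring graph Ĝ is strictly greater than n, then no saturating decodable stream assignment exists. -/
/-- Vertex type of the coloring graph `Ĝ`: the sink subgraph `V̂_j` consists of
`nj j` regular vertices (`Sum.inl`) and `n - nj j` fictitious vertices (`Sum.inr`). -/
abbrev ColoringVertex (t : ℕ) (nj : Fin t → ℕ) (n : ℕ) : Type :=
  (j : Fin t) × (Fin (nj j) ⊕ Fin (n - nj j))

/-- `cross R x y` holds when `x` is a regular vertex `v_{j,k}`, `y` is a fictitious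
vertex of a different sink subgraph `V̂_{j'}`, and the contamination relation
`R j k j'` holds. -/
def cross {t n : ℕ} {nj : Fin t → ℕ} (R : (j : Fin t) → Fin (nj j) → Fin t → Prop)
    (x y : ColoringVertex t nj n) : Prop :=
  x.1 ≠ y.1 ∧ (∃ k : Fin (nj x.1), x.2 = Sum.inl k ∧ R x.1 k y.1) ∧
    ∃ k' : Fin (n - nj y.1), y.2 = Sum.inr k'

/-- The coloring graph `Ĝ`: two distinct vertices in the same sink subgraph are
always adjacent; a regular vertex `v_{j,k}` is adjacent to every fictitious vertex
of `V̂_{j'}` (for `j' ≠ j`) iff `R j k j'`; there are no other adjacencies. -/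
def coloringGraph (t n : ℕ) (nj : Fin t → ℕ)
    (R : (j : Fin t) → Fin (nj j) → Fin t → Prop) :
    SimpleGraph (ColoringVertex t nj n) where
  Adj x y := x ≠ y ∧ (x.1 = y.1 ∨ cross R x y ∨ cross R y x)
  symm := ⟨by
    rintro x y ⟨h1, h2⟩
    refine ⟨h1.symm, ?_⟩
    rcases h2 with h | h | h
    · exact Or.inl h.symm
    · exact Or.inr (Or.inr h)
    · exact Or.inr (Or.inl h)⟩
  loopless := ⟨fun x h => h.1 rfl⟩

/-- A saturating decodable stream assignment: each path `(j,k)` gets a stream in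
`{1,…,n}` (modelled as `Fin n`), such that distinct paths to the same sink get
distinct streams (saturation), and whenever path `k` to sink `j` contaminates onto
some path to a different sink `j'`, some path to `j'` is assigned the same stream
(decodability). -/
def IsSatDecodable (t n : ℕ) (nj : Fin t → ℕ)
    (R : (j : Fin t) → Fin (nj j) → Fin t → Prop)
    (f : (j : Fin t) → Fin (nj j) → Fin n) : Prop :=
  (∀ j, Function.Injective (f j)) ∧
    ∀ (j j' : Fin t) (k : Fin (nj j)), j ≠ j' → R j k j' →
      ∃ k' : Fin (nj j'), f j' k' = f j k

/-!
Given a saturating decodable assignment `f`, give the fictitious vertices of `V̂_j` the streams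
not used by the paths to sink `j`. Within each `V̂_j` the colors are then distinct, and an edge
`v_{j,k} — w_{j',k'}` with `R(j,k,j')` joins distinct colors because decodability makes `f(j,k)`
a stream of some path to sink `j'`, which no fictitious vertex of `V̂_{j'}` uses. This is a proper
`n`-coloring of `Ĝ`.
-/

open Function

theorem Function.Injective.exists_injective_sumElim {α β γ : Type*}
    [Fintype α] [Fintype β] [Fintype γ] {f : α → β} (hf : Injective f)
    (hcard : Fintype.card α + Fintype.card γ ≤ Fintype.card β) :
    ∃ g : γ → β, Injective (Sum.elim f g) := by
  classical
  have hγ : Fintype.card γ ≤ Fintype.card ((Set.range f)ᶜ : Set β) := by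
    rw [Fintype.card_compl_set, Set.card_range_of_injective hf]
    omega
  obtain ⟨e⟩ := Function.Embedding.nonempty_of_card_le hγ
  exact ⟨fun c => e c, hf.sumElim (Subtype.val_injective.comp e.injective)
    fun a c h => (e c).2 ⟨a, h⟩⟩

theorem coloringGraph_colorable {t n : ℕ} {nj : Fin t → ℕ}
    {R : (j : Fin t) → Fin (nj j) → Fin t → Prop}
    (e : (j : Fin t) → Fin (nj j) ⊕ Fin (n - nj j) → Fin n) (he : ∀ j, Injective (e j))
    (hdec : ∀ (j j' : Fin t) (k : Fin (nj j)), j ≠ j' → R j k j' →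
      ∃ k' : Fin (nj j'), e j' (.inl k') = e j (.inl k)) :
    (coloringGraph t n nj R).Colorable n := by
  have cross_ne : ∀ x y : ColoringVertex t nj n, cross R x y → e x.1 x.2 ≠ e y.1 y.2 := by
    rintro ⟨j, a⟩ ⟨j', b⟩ ⟨hne, ⟨k, ha, hR⟩, k', hb⟩ heq
    dsimp only at ha hb heq
    rw [ha, hb] at heq
    obtain ⟨k'', hk''⟩ := hdec j j' k hne hR
    exact Sum.inl_ne_inr (he j' (hk''.trans heq))
  refine ⟨⟨fun x => e x.1 x.2, ?_⟩⟩
  rintro ⟨j, a⟩ ⟨j', b⟩ ⟨hne, rfl | h | h⟩ heq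
  · exact hne (congrArg _ (he j heq))
  · exact cross_ne _ _ h heq
  · exact cross_ne _ _ h heq.symm

theorem no_satDecodable_of_chromaticNumber_gt_general
    (t n : ℕ) (nj : Fin t → ℕ)
    (R : (j : Fin t) → Fin (nj j) → Fin t → Prop)
    (hχ : (n : ℕ∞) < (coloringGraph t n nj R).chromaticNumber) :
    ¬ ∃ f : (j : Fin t) → Fin (nj j) → Fin n, IsSatDecodable t n nj R f := by
  rintro ⟨f, hinj, hdec⟩
  have hext : ∀ j, ∃ g : Fin (n - nj j) → Fin n, Injective (Sum.elim (f j) g) := fun j => by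
    -- `n - nj j` is truncated subtraction; injectivity of `f j` gives `nj j ≤ n`.
    have hle := Fintype.card_le_of_injective _ (hinj j)
    simp only [Fintype.card_fin] at hle
    exact (hinj j).exists_injective_sumElim (by simp only [Fintype.card_fin]; omega)
  choose g hg using hext
  exact hχ.not_ge (coloringGraph_colorable _ hg hdec).chromaticNumber_le

/-- If the chromatic number of the coloring graph `Ĝ` exceeds `n`, then no
saturating decodable stream assignment exists. -/
theorem no_satDecodable_of_chromaticNumber_gt
    (t n : ℕ) (ht : 1 ≤ t) (nj : Fin t → ℕ) (hnj : ∀ j, 1 ≤ nj j)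
    (hn : n = Finset.univ.sup nj)
    (R : (j : Fin t) → Fin (nj j) → Fin t → Prop)
    (hχ : (n : ℕ∞) < (coloringGraph t n nj R).chromaticNumber) :
    ¬ ∃ f : (j : Fin t) → Fin (nj j) → Fin n, IsSatDecodable t n nj R f :=
  no_satDecodable_of_chromaticNumber_gt_general t n nj R hχ
end

section
/- If m_{j,j'} > n_{j'} for some ordered pair of distinct sinks (j,j'), then the chromatic number of the coloring graph Ĝ is strictly greater than n, and consequently no saturating decodable stream assignment exists. -/
theorem Set.ncard_le_card_of_injOn_of_mem_range {α β γ : Type*} [Finite β] {s : Set α}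
    {f : α → γ} (hf : s.InjOn f) {g : β → γ} (h : ∀ a ∈ s, f a ∈ Set.range g) :
    s.ncard ≤ Nat.card β :=
  calc s.ncard = (f '' s).ncard := hf.ncard_image.symm
    _ ≤ (Set.range g).ncard := Set.ncard_le_ncard (by rintro _ ⟨a, ha, rfl⟩; exact h a ha)
    _ = Nat.card (Set.range g) := (Nat.card_coe_set_eq _).symm
    _ ≤ Nat.card β := Finite.card_range_le g

section ColoringGraph

variable {t n : ℕ} {nj : Fin t → ℕ} {R : (j : Fin t) → Fin (nj j) → Fin t → Prop}

theorem coloringGraph_adj_of_fst_eq {x y : ColoringVertex t nj n} (hxy : x ≠ y)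
    (h : x.1 = y.1) : (coloringGraph t n nj R).Adj x y :=
  ⟨hxy, Or.inl h⟩

theorem coloringGraph_adj_inl_inr {j j' : Fin t} (hjj' : j ≠ j') {k : Fin (nj j)}
    (hR : R j k j') (k' : Fin (n - nj j')) :
    (coloringGraph t n nj R).Adj ⟨j, .inl k⟩ ⟨j', .inr k'⟩ :=
  ⟨fun h => hjj' (congrArg Sigma.fst h),
    Or.inr (Or.inl ⟨hjj', ⟨k, rfl, hR⟩, ⟨k', rfl⟩⟩)⟩

theorem SimpleGraph.Coloring.sink_injective {α : Type*} (C : (coloringGraph t n nj R).Coloring α)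
    (j : Fin t) : Function.Injective fun v => C ⟨j, v⟩ :=
  C.injective_comp_of_pairwise_adj (Sigma.mk j) fun _ _ hab =>
    coloringGraph_adj_of_fst_eq (fun h => hab (eq_of_heq (Sigma.mk.inj h).2)) rfl

theorem SimpleGraph.Coloring.sink_bijective (C : (coloringGraph t n nj R).Coloring (Fin n))
    {j : Fin t} (hj : nj j ≤ n) : Function.Bijective fun v => C ⟨j, v⟩ :=
  (C.sink_injective j).bijective_of_nat_card_le (by simp only [Nat.card_sum, Nat.card_fin]; omega)

theorem isSatDecodable_of_coloring (hle : ∀ j, nj j ≤ n)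
    (C : (coloringGraph t n nj R).Coloring (Fin n)) :
    IsSatDecodable t n nj R fun j k => C ⟨j, .inl k⟩ := by
  refine ⟨fun j => (C.sink_injective j).comp Sum.inl_injective,
    fun j j' k hjj' hR => ?_⟩
  obtain ⟨v, hv⟩ := (C.sink_bijective (hle j')).2 (C ⟨j, .inl k⟩)
  cases v with
  | inl k' => exact ⟨k', hv⟩
  | inr k' => exact absurd hv.symm (C.valid (coloringGraph_adj_inl_inr hjj' hR k'))

theorem IsSatDecodable.ncard_le {f : (j : Fin t) → Fin (nj j) → Fin n}
    (hf : IsSatDecodable t n nj R f) {j j' : Fin t} (hjj' : j ≠ j') :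
    {k : Fin (nj j) | R j k j'}.ncard ≤ nj j' :=
  (Set.ncard_le_card_of_injOn_of_mem_range (hf.1 j).injOn (g := f j')
    fun k hk => hf.2 j j' k hjj' hk).trans_eq (Nat.card_fin _)

end ColoringGraph

theorem chromaticNumber_gt_of_overload_general
    (t n : ℕ) (nj : Fin t → ℕ)
    (hn : n = Finset.univ.sup nj)
    (R : (j : Fin t) → Fin (nj j) → Fin t → Prop)
    (j j' : Fin t) (hjj' : j ≠ j')
    (hm : nj j' < {k : Fin (nj j) | R j k j'}.ncard) :
    (n : ℕ∞) < (coloringGraph t n nj R).chromaticNumber ∧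
      ¬ ∃ f : (j : Fin t) → Fin (nj j) → Fin n, IsSatDecodable t n nj R f := by
  have not_sat : ¬ ∃ f, IsSatDecodable t n nj R f := fun ⟨_, hf⟩ =>
    (hf.ncard_le hjj').not_gt hm
  refine ⟨?_, not_sat⟩
  rw [← not_le, SimpleGraph.chromaticNumber_le_iff_colorable]
  rintro ⟨C⟩
  have hle : ∀ i, nj i ≤ n := fun i => hn ▸ Finset.le_sup (Finset.mem_univ i)
  exact not_sat ⟨_, isSatDecodable_of_coloring hle C⟩

/-- If `m_{j,j'} > n_{j'}` for some ordered pair of distinct sinks `(j, j')`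
(where `m_{j,j'}` counts the paths to `j` contaminating onto some path to `j'`),
then the chromatic number of `Ĝ` exceeds `n`, and consequently no saturating
decodable stream assignment exists. -/
theorem chromaticNumber_gt_of_overload
    (t n : ℕ) (ht : 1 ≤ t) (nj : Fin t → ℕ) (hnj : ∀ j, 1 ≤ nj j)
    (hn : n = Finset.univ.sup nj)
    (R : (j : Fin t) → Fin (nj j) → Fin t → Prop)
    (j j' : Fin t) (hjj' : j ≠ j')
    (hm : nj j' < {k : Fin (nj j) | R j k j'}.ncard) :
    (n : ℕ∞) < (coloringGraph t n nj R).chromaticNumber ∧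
      ¬ ∃ f : (j : Fin t) → Fin (nj j) → Fin n, IsSatDecodable t n nj R f :=
  chromaticNumber_gt_of_overload_general t n nj hn R j j' hjj' hm
end
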